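/- arXiv:2102.09169 — 4 statements merged into one kernel-verified Lean document; each statement's English description precedes it below -/
import Mathlib

section
/- Let F be a field and let λ = (m₁,m₂,m₃), μ = (m₁',m₂',m₃') ∈ ℤ³ both be dominant (m₁ ≥ m₂ ≥ m₃ and m₁' ≥ m₂' ≥ m₃'). Then the inclusion SL₃(F[[t]]) ∩ t^λ SL₃(F[[t]]) t^{-λ} ⊆ SL₃(F[[t]]) ∩ t^μ SL₃(F[[t]]) t^{-μ} (of subsets of SL₃(F((t)))) holds if and only if m_i − m_j ≥ m_i' − m_j' for all i < j, i.e. if and only if λ − μ is dominant. -/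
noncomputable section

open HahnSeries

/-- `t` as a unit of the formal Laurent series ring `F((t))`. -/
def tUnitL (R : Type*) [CommRing R] : (LaurentSeries R)ˣ where
  val := HahnSeries.single (1 : ℤ) (1 : R)
  inv := HahnSeries.single (-1 : ℤ) (1 : R)
  val_inv := by
    rw [HahnSeries.single_mul_single, add_neg_cancel, one_mul, HahnSeries.single_zero_one]
  inv_val := by
    rw [HahnSeries.single_mul_single, neg_add_cancel, one_mul, HahnSeries.single_zero_one]

/-- The diagonal matrix `t^λ = diag(t^{m₁}, t^{m₂}, t^{m₃})` over `F((t))`,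
for `λ = (m₁, m₂, m₃) ∈ ℤ³`. -/
def tDiag (R : Type*) [CommRing R] (m : Fin 3 → ℤ) :
    Matrix (Fin 3) (Fin 3) (LaurentSeries R) :=
  Matrix.diagonal fun i => ((tUnitL R ^ m i : (LaurentSeries R)ˣ) : LaurentSeries R)

/-- `SL₃(F[[t]])`, as a subset of the 3×3 matrices over `F((t))`. -/
def SLO (F : Type*) [Field F] : Set (Matrix (Fin 3) (Fin 3) (LaurentSeries F)) :=
  {A | (∀ i j, A i j ∈ (HahnSeries.ofPowerSeries ℤ F).range) ∧ A.det = 1}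

/-- `t^λ SL₃(F[[t]]) t^{−λ}`, as a subset of the 3×3 matrices over `F((t))`. -/
def tConjSLO (F : Type*) [Field F] (m : Fin 3 → ℤ) :
    Set (Matrix (Fin 3) (Fin 3) (LaurentSeries F)) :=
  {A | ∃ B ∈ SLO F, A = tDiag F m * B * tDiag F (fun i => -(m i))}


/-!
`SL₃(F[[t]]) ∩ t^λ SL₃(F[[t]]) t^{-λ}` consists of the matrices of determinant one whose
`(i, j)` entry lies in `t^{max(0, mᵢ - mⱼ)} F[[t]]`. Such "entrywise order bound" groups are
ordered by inclusion exactly as their bounds are ordered pointwise: one direction is trivial, and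
for the other the transvection `1 + t^{a i j} E_{ij}` lies in the group with bound `a` but has an
entry of order exactly `a i j`. For dominant `λ`, `μ` the bound `max(0, mᵢ - mⱼ)` is `mᵢ - mⱼ`
above the diagonal and `0` elsewhere, which turns the pointwise comparison into `λ - μ` dominant.
-/

theorem LaurentSeries.mem_range_ofPowerSeries_iff {R : Type*} [Ring R] (x : LaurentSeries R) :
    x ∈ (ofPowerSeries ℤ R).range ↔ ∀ n < 0, x.coeff n = 0 := by
  constructor
  · rintro ⟨f, rfl⟩ n hn
    rw [PowerSeries.coeff_coe, if_pos hn]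
  · intro h
    refine ⟨PowerSeries.mk fun m => x.coeff m, ?_⟩
    ext n
    rw [PowerSeries.coeff_coe]
    split_ifs with hn
    · exact (h n hn).symm
    · rw [PowerSeries.coeff_mk, Int.natAbs_of_nonneg (not_lt.mp hn)]

section CoeffsVanishBelow

open Matrix

variable {n R : Type*}

def CoeffsVanishBelow [Zero R] (a : n → n → ℤ) (A : Matrix n n (LaurentSeries R)) : Prop :=
  ∀ i j, ∀ k < a i j, (A i j).coeff k = 0

theorem CoeffsVanishBelow.mono [Zero R] {a b : n → n → ℤ} {A : Matrix n n (LaurentSeries R)}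
    (hA : CoeffsVanishBelow a A) (hba : ∀ i j, b i j ≤ a i j) : CoeffsVanishBelow b A :=
  fun i j k hk => hA i j k (hk.trans_le (hba i j))

theorem coeffsVanishBelow_max_iff [Zero R] {a b : n → n → ℤ} {A : Matrix n n (LaurentSeries R)} :
    CoeffsVanishBelow (fun i j => max (a i j) (b i j)) A ↔
      CoeffsVanishBelow a A ∧ CoeffsVanishBelow b A := by
  simp only [CoeffsVanishBelow, lt_max_iff, or_imp, forall_and]

theorem coeffsVanishBelow_transvection [DecidableEq n] [CommRing R] {a : n → n → ℤ}
    (ha : ∀ k, a k k ≤ 0) {i j : n} (hij : i ≠ j) :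
    CoeffsVanishBelow a (transvection i j (single (a i j) (1 : R))) := by
  intro p q k hk
  by_cases hpq : p = i ∧ q = j
  · obtain ⟨rfl, rfl⟩ := hpq
    simp [transvection, hij, coeff_single_of_ne hk.ne]
  · have hp : (transvection i j (single (a i j) (1 : R))) p q = (1 : Matrix n n _) p q := by
      rw [transvection, Matrix.add_apply, single_apply,
        if_neg fun h => hpq ⟨h.1.symm, h.2.symm⟩, add_zero]
    rw [hp, one_apply]
    split_ifs with h
    · subst h
      rw [HahnSeries.coeff_one, if_neg (hk.trans_le (ha p)).ne]
    · rfl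

theorem setOf_coeffsVanishBelow_subset_iff [Fintype n] [DecidableEq n] [CommRing R]
    [Nontrivial R] {a b : n → n → ℤ} (ha : ∀ k, a k k = 0) (hb : ∀ k, b k k = 0) :
    {A : Matrix n n (LaurentSeries R) | CoeffsVanishBelow a A ∧ A.det = 1} ⊆
        {A | CoeffsVanishBelow b A ∧ A.det = 1} ↔
      ∀ i j, b i j ≤ a i j := by
  constructor
  · intro h i j
    rcases eq_or_ne i j with rfl | hij
    · rw [ha, hb]
    by_contra! hlt
    have hmem := h ⟨coeffsVanishBelow_transvection (R := R) (fun k => (ha k).le) hij,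
      det_transvection_of_ne i j hij _⟩
    have := hmem.1 i j (a i j) hlt
    simp [transvection, hij] at this
  · rintro h A ⟨hA, hdet⟩
    exact ⟨hA.mono h, hdet⟩

end CoeffsVanishBelow

section tDiag

variable {R : Type*} [CommRing R]

theorem coe_tUnitL : ((tUnitL R : (LaurentSeries R)ˣ) : LaurentSeries R) = single 1 1 := rfl

theorem coe_tUnitL_inv :
    ((tUnitL R)⁻¹ : (LaurentSeries R)ˣ) = (single (-1) 1 : LaurentSeries R) := rfl

theorem coe_tUnitL_zpow (k : ℤ) :
    ((tUnitL R ^ k : (LaurentSeries R)ˣ) : LaurentSeries R) = single k 1 := by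
  induction k using Int.induction_on with
  | zero => simp
  | succ n ih => rw [zpow_add_one, Units.val_mul, ih, coe_tUnitL, single_mul_single, mul_one]
  | pred n ih =>
    rw [zpow_sub_one, Units.val_mul, ih, coe_tUnitL_inv, single_mul_single, mul_one,
      sub_eq_add_neg]

theorem tDiag_mul_mul_tDiag_apply (m m' : Fin 3 → ℤ)
    (B : Matrix (Fin 3) (Fin 3) (LaurentSeries R)) (i j : Fin 3) :
    (tDiag R m * B * tDiag R m') i j = single (m i + m' j) 1 * B i j := by
  rw [tDiag, tDiag, Matrix.mul_diagonal, Matrix.diagonal_mul, coe_tUnitL_zpow, coe_tUnitL_zpow,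
    mul_right_comm, single_mul_single, mul_one]

theorem tDiag_mul_tDiag_eq_one {m m' : Fin 3 → ℤ} (h : ∀ i, m i + m' i = 0) :
    tDiag R m * tDiag R m' = 1 := by
  rw [tDiag, tDiag, Matrix.diagonal_mul_diagonal, ← Matrix.diagonal_one]
  congr with i
  rw [← Units.val_mul, ← zpow_add, h, zpow_zero, Units.val_one]

theorem det_tDiag_mul_mul_tDiag {m m' : Fin 3 → ℤ} (h : ∀ i, m i + m' i = 0)
    (B : Matrix (Fin 3) (Fin 3) (LaurentSeries R)) :
    (tDiag R m * B * tDiag R m').det = B.det := by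
  rw [Matrix.det_mul, Matrix.det_mul, mul_right_comm, ← Matrix.det_mul, tDiag_mul_tDiag_eq_one h,
    Matrix.det_one, one_mul]

end tDiag

section SL3

variable {F : Type*} [Field F]

theorem mem_SLO_iff (A : Matrix (Fin 3) (Fin 3) (LaurentSeries F)) :
    A ∈ SLO F ↔ CoeffsVanishBelow (fun _ _ => 0) A ∧ A.det = 1 := by
  simp only [SLO, Set.mem_ofPred_eq, LaurentSeries.mem_range_ofPowerSeries_iff, CoeffsVanishBelow]

theorem mem_tConjSLO_iff (m : Fin 3 → ℤ) (A : Matrix (Fin 3) (Fin 3) (LaurentSeries F)) :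
    A ∈ tConjSLO F m ↔ CoeffsVanishBelow (fun i j => m i - m j) A ∧ A.det = 1 := by
  constructor
  · rintro ⟨B, hB, rfl⟩
    rw [mem_SLO_iff] at hB
    refine ⟨fun i j k hk => ?_, by rw [det_tDiag_mul_mul_tDiag (by simp), hB.2]⟩
    rw [tDiag_mul_mul_tDiag_apply, coeff_single_mul, one_mul]
    exact hB.1 i j _ (by simp only at hk ⊢; omega)
  · rintro ⟨hA, hdet⟩
    refine ⟨tDiag F (fun i => -(m i)) * A * tDiag F m,
      (mem_SLO_iff _).2 ⟨fun i j k hk => ?_, ?_⟩, ?_⟩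
    · rw [tDiag_mul_mul_tDiag_apply, coeff_single_mul, one_mul]
      exact hA i j _ (by simp only at hk ⊢; omega)
    · rw [det_tDiag_mul_mul_tDiag (by simp), hdet]
    · rw [← Matrix.mul_assoc, ← Matrix.mul_assoc, tDiag_mul_tDiag_eq_one (by simp), Matrix.one_mul,
        Matrix.mul_assoc, tDiag_mul_tDiag_eq_one (by simp), Matrix.mul_one]

theorem SLO_inter_tConjSLO_eq (m : Fin 3 → ℤ) :
    SLO F ∩ tConjSLO F m =
      {A | CoeffsVanishBelow (fun i j => max 0 (m i - m j)) A ∧ A.det = 1} := by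
  ext A
  simp only [Set.mem_inter_iff, mem_SLO_iff, mem_tConjSLO_iff, Set.mem_ofPred_eq,
    coeffsVanishBelow_max_iff]
  tauto

end SL3

theorem forall_max_zero_sub_le_iff {ι : Type*} [LinearOrder ι] {l u : ι → ℤ} (hl : Antitone l)
    (hu : Antitone u) :
    (∀ i j, max 0 (u i - u j) ≤ max 0 (l i - l j)) ↔ ∀ i j, i < j → u i - u j ≤ l i - l j := by
  constructor
  · intro h i j hij
    have := h i j
    have := hl hij.le
    have := hu hij.le
    omega
  · intro h i j
    rcases lt_or_ge i j with hij | hji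
    · have := h i j hij
      have := hl hij.le
      omega
    · have := hu hji
      omega

/-- For dominant `λ`, `μ` one has
`SL₃(F[[t]]) ∩ t^λ SL₃(F[[t]]) t^{−λ} ⊆ SL₃(F[[t]]) ∩ t^μ SL₃(F[[t]]) t^{−μ}`
if and only if `mᵢ − mⱼ ≥ mᵢ' − mⱼ'` for all `i < j`, i.e. iff `λ − μ` is dominant. -/
theorem statement6 (F : Type*) [Field F] (lam mu : Fin 3 → ℤ)
    (hlam01 : lam 1 ≤ lam 0) (hlam12 : lam 2 ≤ lam 1)
    (hmu01 : mu 1 ≤ mu 0) (hmu12 : mu 2 ≤ mu 1) :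
    SLO F ∩ tConjSLO F lam ⊆ SLO F ∩ tConjSLO F mu ↔
      ∀ i j : Fin 3, i < j → mu i - mu j ≤ lam i - lam j := by
  have hlam : Antitone lam := Fin.antitone_iff_succ_le.2 fun i => by fin_cases i <;> assumption
  have hmu : Antitone mu := Fin.antitone_iff_succ_le.2 fun i => by fin_cases i <;> assumption
  rw [SLO_inter_tConjSLO_eq, SLO_inter_tConjSLO_eq,
    setOf_coeffsVanishBelow_subset_iff (by simp) (by simp)]
  exact forall_max_zero_sub_le_iff hlam hmu
end
end

section
/- Let R be a commutative ring and λ = (m₁,m₂,m₃) ∈ ℤ³ with m₁ ≥ m₂ ≥ m₃. For a polynomial p ∈ R[t] and i < j, let U_{ij}(p) = I₃ + p·E_{ij} (the elementary unipotent matrix). Then the multiplication map (p₁₂, p₂₃, p₁₃) ↦ U₁₂(p₁₂) · U₂₃(p₂₃) · U₁₃(p₁₃) is a bijection from P_{m₁−m₂} × P_{m₂−m₃} × P_{m₁−m₃} onto J^λ(R), where P_d ⊆ R[t] denotes the set of polynomials of degree < d (so P_0 = {0}), and J^λ(R) is the set of upper unitriangular 3×3 matrices (a_{ij}) over R[t]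 with deg a₁₂ ≤ m₁−m₂−1, deg a₂₃ ≤ m₂−m₃−1, deg a₁₃ ≤ m₁−m₃−1. In particular J^λ(R) is in bijection with R^{2(m₁−m₃)}. -/
noncomputable section

open Polynomial

/-- `P_d`: the set of polynomials of degree `< d` (so `P_0 = {0}`). -/
def Pset (R : Type*) [CommRing R] (d : ℕ) : Set (Polynomial R) :=
  {p | p.degree < (d : WithBot ℕ)}

/-- The elementary unipotent matrix `U_{ij}(p) = I₃ + p·E_{ij}`. -/
def elemU (R : Type*) [CommRing R] (i j : Fin 3) (p : Polynomial R) :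
    Matrix (Fin 3) (Fin 3) (Polynomial R) :=
  1 + Matrix.single i j p

/-- `J^λ(R)`: upper unitriangular 3×3 matrices over `R[t]` with
`deg a₁₂ ≤ m₁−m₂−1`, `deg a₂₃ ≤ m₂−m₃−1`, `deg a₁₃ ≤ m₁−m₃−1`. -/
def JLam (R : Type*) [CommRing R] (m : Fin 3 → ℤ) :
    Set (Matrix (Fin 3) (Fin 3) (Polynomial R)) :=
  {A | A 0 0 = 1 ∧ A 1 1 = 1 ∧ A 2 2 = 1 ∧
       A 1 0 = 0 ∧ A 2 0 = 0 ∧ A 2 1 = 0 ∧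
       (A 0 1).degree < ((m 0 - m 1).toNat : WithBot ℕ) ∧
       (A 1 2).degree < ((m 1 - m 2).toNat : WithBot ℕ) ∧
       (A 0 2).degree < ((m 0 - m 2).toNat : WithBot ℕ)}

/-! The product `U₁₂(a) U₂₃(b) U₁₃(c)` is the unitriangular matrix with entries `a, b, c + a b`
above the diagonal, so the map is inverted by `A ↦ (a₁₂, a₂₃, a₁₃ - a₁₂ a₂₃)`. Both directions
respect the degree bounds because `deg (a₁₂ a₂₃) < (m₁ - m₂) + (m₂ - m₃) = m₁ - m₃`; dominance
of `λ` is what makes the last sum of truncated differences add up. -/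

theorem Polynomial.mul_mem_degreeLT {R : Type*} [Semiring R] {n k : ℕ} {a b : R[X]}
    (ha : a ∈ degreeLT R n) (hb : b ∈ degreeLT R k) : a * b ∈ degreeLT R (n + k) := by
  rcases eq_or_ne a 0 with rfl | ha0
  · simp
  rcases eq_or_ne b 0 with rfl | hb0
  · simp
  rw [mem_degreeLT, ← natDegree_lt_iff_degree_lt ha0] at ha
  rw [mem_degreeLT, ← natDegree_lt_iff_degree_lt hb0] at hb
  rw [mem_degreeLT]
  calc (a * b).degree ≤ (a * b).natDegree := degree_le_natDegree
    _ ≤ (a.natDegree + b.natDegree : ℕ) := by exact_mod_cast natDegree_mul_le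
    _ < (n + k : ℕ) := by exact_mod_cast Nat.add_lt_add ha hb

theorem Pset_eq_degreeLT (R : Type*) [CommRing R] (d : ℕ) : Pset R d = degreeLT R d := by
  ext p
  exact mem_degreeLT.symm

section Pset

variable {R : Type*} [CommRing R] {n k : ℕ} {a b c : R[X]}

theorem add_mul_mem_Pset (ha : a ∈ Pset R n) (hb : b ∈ Pset R k) (hc : c ∈ Pset R (n + k)) :
    c + a * b ∈ Pset R (n + k) := by
  rw [Pset_eq_degreeLT] at *
  exact add_mem hc (mul_mem_degreeLT ha hb)

theorem sub_mul_mem_Pset (ha : a ∈ Pset R n) (hb : b ∈ Pset R k) (hc : c ∈ Pset R (n + k)) :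
    c - a * b ∈ Pset R (n + k) := by
  rw [Pset_eq_degreeLT] at *
  exact sub_mem hc (mul_mem_degreeLT ha hb)

end Pset

theorem elemU_mul_elemU_mul_elemU (R : Type*) [CommRing R] (a b c : R[X]) :
    elemU R 0 1 a * elemU R 1 2 b * elemU R 0 2 c = !![1, a, c + a * b; 0, 1, b; 0, 0, 1] := by
  ext i j
  fin_cases i <;> fin_cases j <;>
    simp [elemU, Matrix.mul_apply, Matrix.one_apply, Fin.sum_univ_three]

theorem injective_elemU_mul_elemU_mul_elemU (R : Type*) [CommRing R] :
    Function.Injective fun u : R[X] × R[X] × R[X] =>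
      elemU R 0 1 u.1 * elemU R 1 2 u.2.1 * elemU R 0 2 u.2.2 := by
  rintro ⟨a, b, c⟩ ⟨a', b', c'⟩ h
  simp only [elemU_mul_elemU_mul_elemU] at h
  have ha : a = a' := by simpa using congr_fun₂ h 0 1
  have hb : b = b' := by simpa using congr_fun₂ h 1 2
  subst ha hb
  have hc : c = c' := by simpa using congr_fun₂ h 0 2
  rw [hc]

theorem unitriangular_mem_JLam_iff (R : Type*) [CommRing R] (m : Fin 3 → ℤ) (x y z : R[X]) :
    !![1, x, z; 0, 1, y; 0, 0, 1] ∈ JLam R m ↔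
      x ∈ Pset R (m 0 - m 1).toNat ∧ y ∈ Pset R (m 1 - m 2).toNat ∧
        z ∈ Pset R (m 0 - m 2).toNat := by
  simp [JLam, Pset]

theorem eq_unitriangular_of_mem_JLam (R : Type*) [CommRing R] (m : Fin 3 → ℤ)
    {A : Matrix (Fin 3) (Fin 3) R[X]} (hA : A ∈ JLam R m) :
    A = !![1, A 0 1, A 0 2; 0, 1, A 1 2; 0, 0, 1] := by
  obtain ⟨h00, h11, h22, h10, h20, h21, -⟩ := hA
  ext i j
  fin_cases i <;> fin_cases j <;> simp [*]

/-- For dominant `λ = (m₁, m₂, m₃)`, the multiplication map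
`(p₁₂, p₂₃, p₁₃) ↦ U₁₂(p₁₂)·U₂₃(p₂₃)·U₁₃(p₁₃)` is a bijection from
`P_{m₁−m₂} × P_{m₂−m₃} × P_{m₁−m₃}` onto `J^λ(R)`. -/
theorem statement7 (R : Type*) [CommRing R] (m : Fin 3 → ℤ)
    (h01 : m 1 ≤ m 0) (h12 : m 2 ≤ m 1) :
    Set.BijOn
      (fun u : Polynomial R × Polynomial R × Polynomial R =>
        elemU R 0 1 u.1 * elemU R 1 2 u.2.1 * elemU R 0 2 u.2.2)
      (Pset R (m 0 - m 1).toNat ×ˢ (Pset R (m 1 - m 2).toNat ×ˢ Pset R (m 0 - m 2).toNat))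
      (JLam R m) := by
  have hsum : (m 0 - m 1).toNat + (m 1 - m 2).toNat = (m 0 - m 2).toNat := by omega
  refine ⟨?_, (injective_elemU_mul_elemU_mul_elemU R).injOn, ?_⟩
  · rintro ⟨a, b, c⟩ ⟨ha, hb, hc⟩
    dsimp only at ha hb hc ⊢
    rw [elemU_mul_elemU_mul_elemU, unitriangular_mem_JLam_iff, ← hsum]
    exact ⟨ha, hb, add_mul_mem_Pset ha hb (hsum ▸ hc)⟩
  · intro A hA
    obtain ⟨-, -, -, -, -, -, hx, hy, hz⟩ := id hA
    refine ⟨(A 0 1, A 1 2, A 0 2 - A 0 1 * A 1 2),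
      ⟨hx, hy, hsum ▸ sub_mul_mem_Pset hx hy (hsum ▸ hz)⟩, ?_⟩
    dsimp only
    rw [elemU_mul_elemU_mul_elemU, sub_add_cancel]
    exact (eq_unitriangular_of_mem_JLam R m hA).symm
end
end

section
/- Let q, l, N be integers with q ≥ 3, l ≥ 2 and N > l, and let d₁, …, d_l be integers with d_i ≥ 2 for all i and d₁ + ⋯ + d_l = N + l. Then ∏_{i=1}^{l} (q^{d_i} − 1) > (q+1)^l · (q−1) · (q+2). -/
/-- If `q ≥ 3`, `l ≥ 2`, `N > l` and `d₁, …, d_l ≥ 2` are integers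
with `d₁ + ⋯ + d_l = N + l`, then `∏ᵢ (q^{dᵢ} − 1) > (q+1)^l (q−1) (q+2)`. -/
theorem statement11 (q N l : ℕ) (hq : 3 ≤ q) (hl : 2 ≤ l) (hN : l < N)
    (d : Fin l → ℕ) (hd : ∀ i, 2 ≤ d i) (hsum : ∑ i, d i = N + l) :
    ((q : ℤ) + 1) ^ l * ((q : ℤ) - 1) * ((q : ℤ) + 2)
      < ∏ i, ((q : ℤ) ^ d i - 1) := by
  have hQ : (3:ℤ) ≤ (q:ℤ) := by exact_mod_cast hq
  obtain ⟨j, hj⟩ : ∃ j, 3 ≤ d j := by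
    by_contra h
    push_neg at h
    have hall : ∀ i, d i = 2 := fun i => le_antisymm (Nat.lt_succ_iff.mp (h i)) (hd i)
    have hs : ∑ i, d i = 2 * l := by
      simp [hall, Finset.sum_const, Finset.card_univ, mul_comm]
    omega
  have hlow : ∀ i : Fin l, (0:ℤ) ≤ (q:ℤ)^2 - 1 ∧ (q:ℤ)^2 - 1 ≤ (q:ℤ)^(d i) - 1 := by
    intro i
    constructor
    · nlinarith
    · have : (q:ℤ)^2 ≤ (q:ℤ)^(d i) := pow_le_pow_right₀ (by linarith) (hd i)
      linarith
  have h1 : ((q:ℤ)^3 - 1) * ((q:ℤ)^2 - 1)^(l-1) ≤ ∏ i, ((q:ℤ)^(d i) - 1) := by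
    rw [← Finset.mul_prod_erase Finset.univ _ (Finset.mem_univ j)]
    have hcard : (Finset.univ.erase j).card = l - 1 := by
      rw [Finset.card_erase_of_mem (Finset.mem_univ j), Finset.card_univ, Fintype.card_fin]
    apply mul_le_mul
    · have : (q:ℤ)^3 ≤ (q:ℤ)^(d j) := pow_le_pow_right₀ (by linarith) hj
      linarith
    · calc ((q:ℤ)^2 - 1)^(l-1) = ∏ _i ∈ Finset.univ.erase j, ((q:ℤ)^2 - 1) := by
            rw [Finset.prod_const, hcard]
        _ ≤ ∏ i ∈ Finset.univ.erase j, ((q:ℤ)^(d i) - 1) :=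
            Finset.prod_le_prod (fun i _ => (hlow i).1) (fun i _ => (hlow i).2)
    · exact pow_nonneg (by nlinarith) _
    · linarith [(hlow j).1, (hlow j).2]
  refine lt_of_lt_of_le ?_ h1
  -- Numeric inequality: (Q+1)^l (Q-1)(Q+2) < (Q^3-1)(Q^2-1)^(l-1)
  set Q : ℤ := (q:ℤ)
  obtain ⟨m, rfl⟩ : ∃ m, l = m + 1 := ⟨l - 1, by omega⟩
  have hm : 1 ≤ m := by omega
  simp only [Nat.add_sub_cancel]
  have hfac : (Q^2 - 1)^m = (Q+1)^m * (Q-1)^m := by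
    rw [← mul_pow]; ring_nf
  have h2 : (Q-1) ≤ (Q-1)^m := by
    calc (Q-1) = (Q-1)^1 := (pow_one _).symm
      _ ≤ (Q-1)^m := pow_le_pow_right₀ (by linarith) hm
  have h3 : (Q+1)*(Q-1)*(Q+2) < (Q^3-1)*(Q-1)^m := by
    have h34 : 3*Q^3 ≤ Q^4 := by nlinarith [sq_nonneg Q, sq_nonneg (Q*Q)]
    have h23 : 3*Q^2 ≤ Q^3 := by nlinarith [sq_nonneg Q]
    have : (Q+1)*(Q-1)*(Q+2) < (Q^3-1)*(Q-1) := by nlinarith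
    have h4 : (Q^3-1)*(Q-1) ≤ (Q^3-1)*(Q-1)^m :=
      mul_le_mul_of_nonneg_left h2 (by nlinarith)
    linarith
  have h5 : (0:ℤ) < (Q+1)^m := pow_pos (by linarith) _
  calc (Q+1)^(m+1)*(Q-1)*(Q+2) = (Q+1)^m * ((Q+1)*(Q-1)*(Q+2)) := by ring
    _ < (Q+1)^m * ((Q^3-1)*(Q-1)^m) := by exact mul_lt_mul_of_pos_left h3 h5
    _ = (Q^3-1)*(Q^2-1)^m := by rw [hfac]; ring
end

section
/- Let F be a field and let a = (a_{ij}) be a 3×3 matrix over F[[t]] with det a = 1, such that the constant terms of a₂₁ and a₃₁ are zero. Then there exists a unique pair (u₁₂, u₁₃) ∈ F² such that the constant terms of a₁₂ − u₁₂·a₂₂ − u₁₃·a₃₂ and of a₁₃ − u₁₂·a₂₃ − u₁₃·a₃₃ are both zero. (Equivalently: the 2×2 matrix with rows (a₂₂(0), a₃₂(0)) and (a₂₃(0), a₃₃(0)) is invertible, so the linear system with right-hand side (a₁₂(0), a₁₃(0)) has a unique solution.) -/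
/-! Taking constant terms, the first column of `a(0)` is `(a₁₁(0), 0, 0)`, so
`1 = a₁₁(0) · det m` for the lower-right `2 × 2` minor `m` of `a(0)`. Hence `m` is invertible,
and the two conditions say exactly that `(u₁₂, u₁₃) ᵥ* m = (a₁₂(0), a₁₃(0))`. -/

open Matrix

theorem Matrix.det_eq_mul_det_submatrix_succ_of_column_zero {R : Type*} [CommRing R] {n : ℕ}
    (A : Matrix (Fin (n + 1)) (Fin (n + 1)) R) (hA : ∀ i : Fin n, A i.succ 0 = 0) :
    A.det = A 0 0 * (A.submatrix Fin.succ Fin.succ).det := by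
  simp [det_succ_column_zero A, Fin.sum_univ_succ, hA]

theorem Matrix.existsUnique_vecMul_eq {m R : Type*} [Fintype m] [DecidableEq m] [CommRing R]
    {M : Matrix m m R} (hM : IsUnit M.det) (r : m → R) : ∃! u, u ᵥ* M = r :=
  ⟨r ᵥ* M⁻¹, show _ = _ by rw [vecMul_vecMul, nonsing_inv_mul M hM, vecMul_one],
    fun u hu => by rw [← hu, vecMul_vecMul, mul_nonsing_inv M hM, vecMul_one]⟩

/-- If `a ∈ M₃(F[[t]])` has `det a = 1` and the constant terms of
`a₂₁` and `a₃₁` vanish, then there is a unique pair `(u₁₂, u₁₃) ∈ F²` such that the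
constant terms of `a₁₂ − u₁₂a₂₂ − u₁₃a₃₂` and of `a₁₃ − u₁₂a₂₃ − u₁₃a₃₃` both
vanish. -/
theorem statement12 (F : Type*) [Field F]
    (a : Matrix (Fin 3) (Fin 3) (PowerSeries F)) (ha : a.det = 1)
    (h21 : PowerSeries.constantCoeff (a 1 0) = 0)
    (h31 : PowerSeries.constantCoeff (a 2 0) = 0) :
    ∃! u : F × F,
      PowerSeries.constantCoeff
          (a 0 1 - PowerSeries.C u.1 * a 1 1 - PowerSeries.C u.2 * a 2 1) = 0 ∧
      PowerSeries.constantCoeff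
          (a 0 2 - PowerSeries.C u.1 * a 1 2 - PowerSeries.C u.2 * a 2 2) = 0 := by
  set b := a.map PowerSeries.constantCoeff
  have hb : b.det = 1 := by
    rw [← map_one PowerSeries.constantCoeff, ← ha, RingHom.map_det]
    rfl
  rw [det_eq_mul_det_submatrix_succ_of_column_zero b (Fin.forall_fin_two.2 ⟨h21, h31⟩)] at hb
  have hminor : IsUnit (b.submatrix Fin.succ Fin.succ).det := .of_mul_eq_one_right _ hb
  refine (Equiv.existsUnique_congr (finTwoArrowEquiv F).symm fun u => ?_).2
    (existsUnique_vecMul_eq hminor fun j => b 0 j.succ)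
  simp only [sub_sub, map_sub, map_add, map_mul, PowerSeries.constantCoeff_C, sub_eq_zero,
    finTwoArrowEquiv_symm_apply, map_apply, funext_iff, vecMul, dotProduct, submatrix_apply,
    Fin.sum_univ_two, cons_val_zero, Fin.succ_zero_eq_one, cons_val_one, Fin.succ_one_eq_two,
    Fin.forall_fin_two, b]
  exact and_congr eq_comm eq_comm
end
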